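/- Let F be strictly convex, let S be convex, let J ≠ ∅, and let Θ_j be strictly convex for every j ∈ J. Suppose that for every x ∈ S the projection Π_F(x; Θ_j) is nonempty for all j ∈ J. Then the set of minimizers over S of the function T₁(x) := max{T_F(x; Θ_j) : j ∈ J} has at most one element if and only if ⋂_{j∈J} (Θ_j ∩ S) contains at most one point. -/

import Mathlib

open Set Pointwise Filter Topology Bornology Function

variable {X : Type*} [NormedAddCommGroup X] [NormedSpace ℝ X]

/-- The Minkowski gauge of `F`: `ρ_F(x) = inf {t ≥ 0 : x ∈ t • F}`. -/
noncomputable def rhoF (F : Set X) (x : X) : ℝ :=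
  sInf {t : ℝ | 0 ≤ t ∧ x ∈ t • F}

/-- The maximal time function `C_F(x; Q) = sup {ρ_F(q - x) : q ∈ Q}`. -/
noncomputable def maxTime (F Q : Set X) (x : X) : ℝ :=
  sSup ((fun q => rhoF F (q - x)) '' Q)

/-- The minimal time function `T_F(x; Θ) = inf {ρ_F(q - x) : q ∈ Θ}`. -/
noncomputable def minTime (F Θ : Set X) (x : X) : ℝ :=
  sInf ((fun q => rhoF F (q - x)) '' Θ)

/-- The projection `Π_F(x; Θ) = {u ∈ Θ : ρ_F(u - x) = T_F(x; Θ)}`. -/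
def nearProj (F Θ : Set X) (x : X) : Set X :=
  {u ∈ Θ | rhoF F (u - x) = minTime F Θ x}

/-!
If `x ≠ y` both minimize `T₁` over `S` with value `V > 0`, then for every `j` the midpoint
`z = (x + y) / 2 ∈ S` is strictly closer than `V` to `Θ_j`: with projections `u` of `x` and `v`
of `y` onto `Θ_j`, either `u - x ≠ v - y` and strict convexity of `F` gives
`ρ_F((u + v) / 2 - z) < V`, or `u - x = v - y`, so `u ≠ v` and `(u + v) / 2 ∈ int Θ_j` can be
pushed towards `z`. Hence `T₁(z) < V`, a contradiction. So the minimizers are either unique or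
have value `0`, and since `F` is bounded, `T₁(x) = 0` forces `x` into every `Θ_j`. Conversely
`T₁ ≥ 0` vanishes on `⋂ j, Θ_j ∩ S`.
-/

lemma rhoF_eq_gauge {F : Set X} (h0 : (0 : X) ∈ F) : rhoF F = gauge F := by
  funext x
  -- `rhoF` admits the time `t = 0` and `gauge` does not; this only matters at `x = 0`.
  rcases eq_or_ne x 0 with rfl | hx
  · rw [gauge_zero]
    have hmem : (0 : ℝ) ∈ {t : ℝ | 0 ≤ t ∧ (0 : X) ∈ t • F} :=
      ⟨le_rfl, by rw [zero_smul_set ⟨0, h0⟩]; exact Set.zero_mem_zero⟩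
    exact le_antisymm (csInf_le ⟨0, fun t ht => ht.1⟩ hmem) (le_csInf ⟨0, hmem⟩ fun t ht => ht.1)
  · unfold rhoF gauge
    congr 1
    ext t
    refine ⟨fun ⟨ht, hm⟩ => ⟨ht.lt_of_ne ?_, hm⟩, fun ⟨ht, hm⟩ => ⟨ht.le, hm⟩⟩
    rintro rfl
    rw [zero_smul_set ⟨0, h0⟩] at hm
    exact hx hm

lemma gauge_add_lt_of_strictConvex {F : Set X} (hFc : IsClosed F) (hF0 : (0 : X) ∈ interior F)
    (hFs : StrictConvex ℝ F) {a b : X} (hab : a ≠ b) {V : ℝ} (hV : 0 < V)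
    (ha : gauge F a ≤ V) (hb : gauge F b ≤ V) {s t : ℝ} (hs : 0 < s) (ht : 0 < t)
    (hst : s + t = 1) : gauge F (s • a + t • b) < V := by
  have hFnhds : F ∈ 𝓝 (0 : X) := mem_interior_iff_mem_nhds.1 hF0
  have hscaled_mem : ∀ c : X, gauge F c ≤ V → V⁻¹ • c ∈ F := fun c hc => by
    rw [← hFc.closure_eq, ← gauge_le_one_iff_mem_closure hFs.convex hFnhds,
      gauge_smul_of_nonneg (inv_nonneg.2 hV.le), smul_eq_mul, inv_mul_le_one₀ hV]
    exact hc
  have hne : V⁻¹ • a ≠ V⁻¹ • b := (smul_right_injective X (inv_ne_zero hV.ne')).ne hab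
  have hlt : gauge F (s • V⁻¹ • a + t • V⁻¹ • b) < 1 :=
    interior_subset_gauge_lt_one F (hFs (hscaled_mem a ha) (hscaled_mem b hb) hne hs ht hst)
  have hrescale : s • a + t • b = V • (s • V⁻¹ • a + t • V⁻¹ • b) := by
    match_scalars <;> field_simp
  rw [hrescale, gauge_smul_of_nonneg hV.le, smul_eq_mul]
  exact mul_lt_of_lt_one_right hV hlt

section minTime

variable {F Θ : Set X}

lemma rhoF_nonneg (x : X) : 0 ≤ rhoF F x :=
  Real.sInf_nonneg fun _ ht => ht.1

lemma minTime_nonneg (x : X) : 0 ≤ minTime F Θ x :=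
  Real.sInf_nonneg <| by
    rintro _ ⟨q, -, rfl⟩
    exact rhoF_nonneg _

lemma minTime_le {x q : X} (hq : q ∈ Θ) : minTime F Θ x ≤ rhoF F (q - x) :=
  csInf_le ⟨0, by rintro _ ⟨p, -, rfl⟩; exact rhoF_nonneg _⟩ ⟨q, hq, rfl⟩

lemma minTime_eq_zero_of_mem (h0 : (0 : X) ∈ F) {x : X} (hx : x ∈ Θ) : minTime F Θ x = 0 :=
  le_antisymm (by simpa [rhoF_eq_gauge h0] using minTime_le (F := F) (x := x) hx) (minTime_nonneg x)

lemma mem_of_minTime_eq_zero (hF0 : (0 : X) ∈ interior F) (hFb : IsBounded F) {x : X}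
    (hproj : (nearProj F Θ x).Nonempty) (h : minTime F Θ x = 0) : x ∈ Θ := by
  obtain ⟨u, hu, hux⟩ := hproj
  rw [h, rhoF_eq_gauge (interior_subset hF0),
    gauge_eq_zero (absorbent_nhds_zero (mem_interior_iff_mem_nhds.1 hF0))
      ((NormedSpace.isVonNBounded_iff ℝ).2 hFb), sub_eq_zero] at hux
  exact hux ▸ hu

lemma minTime_lt_of_mem_interior (h0 : (0 : X) ∈ F) {m z : X} (hm : m ∈ interior Θ) {V : ℝ}
    (hV : 0 < V) (hmz : rhoF F (m - z) ≤ V) : minTime F Θ z < V := by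
  have hpath : Tendsto (fun t : ℝ => m + t • (z - m)) (𝓝[>] 0) (𝓝 m) :=
    ((Continuous.tendsto' (by fun_prop) 0 m (by simp)).mono_left nhdsWithin_le_nhds)
  obtain ⟨t, hmem, ht1, ht0⟩ :=
    ((hpath.eventually_mem (mem_interior_iff_mem_nhds.1 hm)).and
      (((eventually_lt_nhds one_pos).filter_mono nhdsWithin_le_nhds).and self_mem_nhdsWithin)).exists
  calc minTime F Θ z ≤ rhoF F (m + t • (z - m) - z) := minTime_le hmem
    _ = (1 - t) * rhoF F (m - z) := by
      rw [show m + t • (z - m) - z = (1 - t) • (m - z) by module, rhoF_eq_gauge h0,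
        gauge_smul_of_nonneg (sub_nonneg.2 ht1.le), smul_eq_mul]
    _ < V := by nlinarith [rhoF_nonneg (F := F) (m - z)]

lemma minTime_midpoint_lt (hFc : IsClosed F) (hF0 : (0 : X) ∈ interior F)
    (hFs : StrictConvex ℝ F) (hΘ : StrictConvex ℝ Θ) {x y u v : X} (hxy : x ≠ y)
    (hu : u ∈ Θ) (hv : v ∈ Θ) {V : ℝ} (hV : 0 < V) (hux : rhoF F (u - x) ≤ V)
    (hvy : rhoF F (v - y) ≤ V) :
    minTime F Θ ((1 / 2 : ℝ) • x + (1 / 2 : ℝ) • y) < V := by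
  have h0 : (0 : X) ∈ F := interior_subset hF0
  have hmid : (1 / 2 : ℝ) • u + (1 / 2 : ℝ) • v - ((1 / 2 : ℝ) • x + (1 / 2 : ℝ) • y)
      = (1 / 2 : ℝ) • (u - x) + (1 / 2 : ℝ) • (v - y) := by module
  by_cases hdisp : u - x = v - y
  · have huv : u ≠ v := by
      rintro rfl
      exact hxy (sub_right_injective hdisp)
    refine minTime_lt_of_mem_interior h0
      (hΘ hu hv huv (by norm_num) (by norm_num) (by norm_num : (1 / 2 + 1 / 2 : ℝ) = 1)) hV ?_
    rwa [hmid, ← hdisp, ← add_smul, show (1 / 2 + 1 / 2 : ℝ) = 1 by norm_num, one_smul]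
  · calc minTime F Θ ((1 / 2 : ℝ) • x + (1 / 2 : ℝ) • y)
        ≤ rhoF F ((1 / 2 : ℝ) • u + (1 / 2 : ℝ) • v - ((1 / 2 : ℝ) • x + (1 / 2 : ℝ) • y)) :=
          minTime_le (hΘ.convex hu hv (by norm_num) (by norm_num) (by norm_num))
      _ < V := by
        rw [hmid, rhoF_eq_gauge h0]
        rw [rhoF_eq_gauge h0] at hux hvy
        exact gauge_add_lt_of_strictConvex hFc hF0 hFs hdisp hV hux hvy
          (by norm_num) (by norm_num) (by norm_num)

end minTime

/-- The function `T₁(x) = max_{j ∈ J} T_F(x; Θ_j)`; it is `0` when `J = ∅`. -/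
noncomputable def maxMinTime {κ : Type*} (F : Set X) (J : Finset κ) (Θ : κ → Set X) (x : X) : ℝ :=
  sSup ((fun j => minTime F (Θ j) x) '' ↑J)

section maxMinTime

variable {κ : Type*} {F : Set X} {J : Finset κ} {Θ : κ → Set X}

lemma minTime_le_maxMinTime (x : X) {j : κ} (hj : j ∈ J) :
    minTime F (Θ j) x ≤ maxMinTime F J Θ x :=
  le_csSup (J.finite_toSet.image _).bddAbove ⟨j, hj, rfl⟩

lemma maxMinTime_lt_iff (hJ : J.Nonempty) {x : X} {c : ℝ} :
    maxMinTime F J Θ x < c ↔ ∀ j ∈ J, minTime F (Θ j) x < c := by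
  simp [maxMinTime, (J.finite_toSet.image _).csSup_lt_iff (hJ.to_set.image _)]

lemma maxMinTime_nonneg (x : X) : 0 ≤ maxMinTime F J Θ x :=
  Real.sSup_nonneg <| by
    rintro _ ⟨j, -, rfl⟩
    exact minTime_nonneg x

lemma maxMinTime_eq_zero_of_mem (h0 : (0 : X) ∈ F) {x : X} (hx : ∀ j ∈ J, x ∈ Θ j) :
    maxMinTime F J Θ x = 0 :=
  le_antisymm (Real.sSup_nonpos <| by
      rintro _ ⟨j, hj, rfl⟩
      exact (minTime_eq_zero_of_mem h0 (hx j hj)).le)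
    (maxMinTime_nonneg x)

lemma mem_of_maxMinTime_eq_zero (hF0 : (0 : X) ∈ interior F) (hFb : IsBounded F) {x : X}
    (hproj : ∀ j ∈ J, (nearProj F (Θ j) x).Nonempty) (h : maxMinTime F J Θ x = 0) :
    ∀ j ∈ J, x ∈ Θ j := fun j hj =>
  mem_of_minTime_eq_zero hF0 hFb (hproj j hj)
    (le_antisymm (h ▸ minTime_le_maxMinTime x hj) (minTime_nonneg x))

lemma maxMinTime_midpoint_lt (hFc : IsClosed F) (hF0 : (0 : X) ∈ interior F)
    (hFs : StrictConvex ℝ F) (hΘ : ∀ j ∈ J, StrictConvex ℝ (Θ j)) (hJ : J.Nonempty)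
    {x y : X} (hxy : x ≠ y) (hx : ∀ j ∈ J, (nearProj F (Θ j) x).Nonempty)
    (hy : ∀ j ∈ J, (nearProj F (Θ j) y).Nonempty)
    (hV : 0 < maxMinTime F J Θ x) (hxy_eq : maxMinTime F J Θ y = maxMinTime F J Θ x) :
    maxMinTime F J Θ ((1 / 2 : ℝ) • x + (1 / 2 : ℝ) • y) < maxMinTime F J Θ x := by
  refine (maxMinTime_lt_iff hJ).2 fun j hj => ?_
  obtain ⟨u, hu, hux⟩ := hx j hj
  obtain ⟨v, hv, hvy⟩ := hy j hj
  refine minTime_midpoint_lt hFc hF0 hFs (hΘ j hj) hxy hu hv hV ?_ ?_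
  · exact hux ▸ minTime_le_maxMinTime x hj
  · exact hvy ▸ hxy_eq ▸ minTime_le_maxMinTime y hj

end maxMinTime

theorem stmt12_general {κ : Type*} (F : Set X) (J : Finset κ) (Θ : κ → Set X) (S : Set X)
    (hFc : IsClosed F) (hFb : IsBounded F)
    (hF0 : (0 : X) ∈ interior F) (hFs : StrictConvex ℝ F)
    (hΘs : ∀ j ∈ J, StrictConvex ℝ (Θ j))
    (hSconv : Convex ℝ S)
    (hJ : J.Nonempty)
    (hPi : ∀ x ∈ S, ∀ j ∈ J, (nearProj F (Θ j) x).Nonempty) :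
    {x ∈ S | ∀ y ∈ S,
      sSup ((fun j => minTime F (Θ j) x) '' ↑J) ≤
        sSup ((fun j => minTime F (Θ j) y) '' ↑J)}.Subsingleton ↔
      (⋂ j ∈ J, (Θ j ∩ S)).Subsingleton := by
  change {x ∈ S | ∀ y ∈ S, maxMinTime F J Θ x ≤ maxMinTime F J Θ y}.Subsingleton ↔ _
  have h0 : (0 : X) ∈ F := interior_subset hF0
  constructor
  · refine fun hmin => hmin.anti fun x hx => ?_
    rw [mem_iInter₂] at hx
    obtain ⟨j, hj⟩ := hJ
    exact ⟨(hx j hj).2, fun y _ =>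
      (maxMinTime_eq_zero_of_mem h0 fun j hj => (hx j hj).1).trans_le (maxMinTime_nonneg y)⟩
  · rintro hint x ⟨hxS, hx⟩ y ⟨hyS, hy⟩
    by_contra hxy
    have hVy := le_antisymm (hy x hxS) (hx y hyS)
    rcases (maxMinTime_nonneg x).eq_or_lt with hV | hV
    · have hxΘ := mem_of_maxMinTime_eq_zero hF0 hFb (hPi x hxS) hV.symm
      have hyΘ := mem_of_maxMinTime_eq_zero hF0 hFb (hPi y hyS) (hVy.trans hV.symm)
      exact hxy (hint (mem_iInter₂.2 fun j hj => ⟨hxΘ j hj, hxS⟩)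
        (mem_iInter₂.2 fun j hj => ⟨hyΘ j hj, hyS⟩))
    · have hzS :=
        hSconv hxS hyS (by norm_num) (by norm_num) (by norm_num : (1 / 2 + 1 / 2 : ℝ) = 1)
      exact (hx _ hzS).not_gt <|
        maxMinTime_midpoint_lt hFc hF0 hFs hΘs hJ hxy (hPi x hxS) (hPi y hyS) hV hVy

/-- Corollary 3.6 (ii). -/
theorem stmt12 {κ : Type*} (F : Set X) (J : Finset κ) (Θ : κ → Set X) (S : Set X)
    (hFc : IsClosed F) (hFb : IsBounded F) (hFconv : Convex ℝ F)
    (hF0 : (0 : X) ∈ interior F) (hFs : StrictConvex ℝ F)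
    (hΘne : ∀ j ∈ J, (Θ j).Nonempty) (hΘc : ∀ j ∈ J, IsClosed (Θ j))
    (hΘs : ∀ j ∈ J, StrictConvex ℝ (Θ j))
    (hSne : S.Nonempty) (hSc : IsClosed S) (hSconv : Convex ℝ S)
    (hJ : J.Nonempty)
    (hPi : ∀ x ∈ S, ∀ j ∈ J, (nearProj F (Θ j) x).Nonempty) :
    {x ∈ S | ∀ y ∈ S,
      sSup ((fun j => minTime F (Θ j) x) '' ↑J) ≤
        sSup ((fun j => minTime F (Θ j) y) '' ↑J)}.Subsingleton ↔
      (⋂ j ∈ J, (Θ j ∩ S)).Subsingleton :=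
  stmt12_general F J Θ S hFc hFb hF0 hFs hΘs hSconv hJ hPi
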